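/- Let Φ be an irreducible reduced root system with base Π, J ⊆ Π, π the projection modulo ⟨Π∖J⟩, and Φ_J = π(Φ)∖{0}. Let ã be the highest root of Φ and α̃ = π(ã) the maximal relative root. Let γ be a simple relative root. If iα̃ + jγ ∈ Φ_J for integers i, j, then i ∈ {0, ±1}; moreover if i ≠ 0 then i and j have opposite signs (or j = 0). -/

import Mathlib

open scoped RealInnerProductSpace

/-- A reduced root system `Φ` with a fixed base (system of simple roots) `base`
in a real inner product space. -/
structure RootSystemData (V : Type) [NormedAddCommGroup V] [InnerProductSpace ℝ V] where
  Φ : Set V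
  base : Finset V
  finite : Φ.Finite
  zero_notMem : (0:V) ∉ Φ
  neg_mem : ∀ a ∈ Φ, -a ∈ Φ
  reduced : ∀ a ∈ Φ, ∀ t : ℝ, t • a ∈ Φ → t = 1 ∨ t = -1
  reflect_mem : ∀ a ∈ Φ, ∀ b ∈ Φ, b - (2 * (inner ℝ a b : ℝ) / (inner ℝ a a : ℝ)) • a ∈ Φ
  cartan_int : ∀ a ∈ Φ, ∀ b ∈ Φ, ∃ n : ℤ, 2 * (inner ℝ a b : ℝ) / (inner ℝ a a : ℝ) = (n : ℝ)
  base_sub : ↑base ⊆ Φ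
  base_indep : LinearIndependent ℝ (fun b : base => (b : V))
  base_gen : ∀ a ∈ Φ,
    (∃ c : V → ℕ, a = ∑ b ∈ base, c b • b) ∨ (∃ c : V → ℕ, -a = ∑ b ∈ base, c b • b)

namespace RootSystemData

variable {V : Type} [NormedAddCommGroup V] [InnerProductSpace ℝ V] (RS : RootSystemData V)

/-- `a` is a nonnegative integral combination of the simple roots. -/
def IsPos (a : V) : Prop := ∃ c : V → ℕ, a = ∑ b ∈ RS.base, c b • b

/-- The quotient space `V / ⟨Π ∖ J⟩`, ambient space of the relative roots. -/
abbrev Qspace (J : Finset V) : Type :=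
  V ⧸ Submodule.span ℝ ((RS.base : Set V) \ (J : Set V))

/-- The canonical projection `π : V → V / ⟨Π ∖ J⟩`. -/
def proj (J : Finset V) : V →ₗ[ℝ] RS.Qspace J :=
  Submodule.mkQ _

/-- The set of relative roots `Φ_J = π(Φ) ∖ {0}`. -/
def relRoots (J : Finset V) : Set (RS.Qspace J) := (RS.proj J '' RS.Φ) \ {0}

/-- `β` is a simple relative root: a nonzero image of a simple root in `J`. -/
def IsSimpleRel (J : Finset V) (β : RS.Qspace J) : Prop :=
  β ≠ 0 ∧ ∃ b ∈ J, β = RS.proj J b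

/-- `β` is a positive relative root: a relative root that is a nonnegative
integral combination of the simple relative roots. -/
def IsPosRel (J : Finset V) (β : RS.Qspace J) : Prop :=
  β ∈ RS.relRoots J ∧ ∃ c : V → ℕ, β = ∑ b ∈ J, c b • RS.proj J b

/-- `a` is maximal in `S` with respect to the base `Π`. -/
def IsMaximalIn (S : Set V) (a : V) : Prop := a ∈ S ∧ ∀ b ∈ RS.base, a + b ∉ S

/-- `a` is minimal in `S` with respect to the base `Π`. -/
def IsMinimalIn (S : Set V) (a : V) : Prop := a ∈ S ∧ ∀ b ∈ RS.base, a - b ∉ S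

/-- `a` is the highest root: every root is obtained from it by subtracting a
nonnegative combination of simple roots. -/
def IsHighest (a : V) : Prop :=
  a ∈ RS.Φ ∧ ∀ b ∈ RS.Φ, ∃ c : V → ℕ, a - b = ∑ x ∈ RS.base, c x • x

/-- `S` is an irreducible component of `Φ`: a nonempty subset orthogonal to its
complement admitting no further nontrivial orthogonal splitting. -/
def IsComponent (S : Set V) : Prop :=
  S ⊆ RS.Φ ∧ S.Nonempty ∧ (∀ a ∈ S, ∀ b ∈ RS.Φ \ S, (inner ℝ a b : ℝ) = 0) ∧
    ∀ T ⊆ S, T.Nonempty → (∀ a ∈ T, ∀ b ∈ RS.Φ \ T, (inner ℝ a b : ℝ) = 0) → T = S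

/-- The root system is irreducible. -/
def Irred : Prop := RS.IsComponent RS.Φ

end RootSystemData

/-! Write the highest root as `ã = ∑ c x • x` over the base. For a root `a`, both `ã - a` and
`ã + a` are nonnegative combinations of simple roots, so the coordinates of `a` satisfy
`|a_x| ≤ c x`.

Irreducibility forces `c x > 0` for every simple root `x`. Indeed, since `⟪ã, z⟫ ≥ 0` for simple
`z` while distinct simple roots have `⟪x, z⟫ ≤ 0`, the support of `ã` is orthogonal to the rest
of the base; and an orthogonal splitting `Π = P ⊔ Q` of the base splits every root into
`span P` or `span Q` (induction on the height, peeling off a simple root `x` with `⟪x, a⟫ > 0`).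

If `π a = i • π ã + j • π β₀` with `β₀ ∈ J`, the coordinates of `a` along `J` are
`a_x = i c x + j δ_{x β₀}`. At a second simple root `β₁ ∈ J` this gives `|i| c β₁ ≤ c β₁`, so
`|i| ≤ 1`, and at `β₀` it gives `|i c β₀ + j| ≤ c β₀`, so `i j ≤ 0`. -/

namespace RootSystemData

open Submodule

variable {V : Type} [NormedAddCommGroup V] [InnerProductSpace ℝ V] (RS : RootSystemData V)

theorem exists_dual_family : ∃ φ : V → V →ₗ[ℝ] ℝ,
    (∀ x ∈ RS.base, φ x x = 1) ∧ ∀ x ∈ RS.base, ∀ y ∈ RS.base, x ≠ y → φ x y = 0 := by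
  classical
  have hs : LinearIndepOn ℝ id (RS.base : Set V) := RS.base_indep
  let B := Module.Basis.extend hs
  let i (x : V) (hx : x ∈ RS.base) : hs.extend (Set.subset_univ _) := ⟨x, hs.subset_extend _ hx⟩
  have hBi (x : V) (hx : x ∈ RS.base) : x = B (i x hx) :=
    (Module.Basis.extend_apply_self hs (i x hx)).symm
  refine ⟨fun x => if hx : x ∈ RS.base then B.coord (i x hx) else 0, fun x hx => ?_,
    fun x hx y hy hxy => ?_⟩
  · simp only [dif_pos hx]
    conv_lhs => arg 2; rw [hBi x hx]
    simp
  · simp only [dif_pos hx]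
    rw [hBi y hy, Module.Basis.coord_apply, Module.Basis.repr_self, Finsupp.single_eq_of_ne]
    simpa [i, Subtype.ext_iff] using hxy

/-- Coordinates with respect to the base; only their values on `span ℝ RS.base` are canonical. -/
noncomputable def coord (x : V) : V →ₗ[ℝ] ℝ := RS.exists_dual_family.choose x

variable {RS}

theorem coord_self {x : V} (hx : x ∈ RS.base) : RS.coord x x = 1 :=
  RS.exists_dual_family.choose_spec.1 x hx

theorem coord_of_ne {x y : V} (hx : x ∈ RS.base) (hy : y ∈ RS.base) (hxy : x ≠ y) :
    RS.coord x y = 0 :=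
  RS.exists_dual_family.choose_spec.2 x hx y hy hxy

theorem coord_sum_smul (f : V → ℝ) {x : V} (hx : x ∈ RS.base) :
    RS.coord x (∑ b ∈ RS.base, f b • b) = f x := by
  rw [map_sum, Finset.sum_eq_single_of_mem x hx fun y hy hyx => ?_]
  · simp [coord_self hx]
  · simp [coord_of_ne hx hy (Ne.symm hyx)]

theorem coord_eq_zero_of_mem_span {P : Set V} (hP : P ⊆ RS.base) {x : V} (hx : x ∈ RS.base)
    (hxP : x ∉ P) {v : V} (hv : v ∈ span ℝ P) : RS.coord x v = 0 := by
  have : span ℝ P ≤ LinearMap.ker (RS.coord x) :=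
    span_le.mpr fun y hy => coord_of_ne hx (hP hy) (ne_of_mem_of_not_mem hy hxP).symm
  exact this hv

theorem sum_coord_smul {v : V} (hv : v ∈ span ℝ (RS.base : Set V)) :
    ∑ x ∈ RS.base, RS.coord x v • x = v := by
  obtain ⟨f, -, rfl⟩ := mem_span_finset.mp hv
  exact Finset.sum_congr rfl fun x hx => by rw [coord_sum_smul f hx]

theorem exists_coord_ne_zero {v : V} (hv : v ∈ span ℝ (RS.base : Set V)) (h : v ≠ 0) :
    ∃ x ∈ RS.base, RS.coord x v ≠ 0 := by
  by_contra! hcoord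
  refine h ?_
  rw [← sum_coord_smul hv]
  exact Finset.sum_eq_zero fun x hx => by simp [hcoord x hx]

theorem IsPos.mem_span {a : V} (ha : RS.IsPos a) : a ∈ span ℝ (RS.base : Set V) := by
  obtain ⟨c, rfl⟩ := ha
  exact sum_mem fun x hx => smul_of_tower_mem _ _ (subset_span hx)

theorem IsPos.coord_nonneg {a : V} (ha : RS.IsPos a) {x : V} (hx : x ∈ RS.base) :
    0 ≤ RS.coord x a := by
  obtain ⟨c, rfl⟩ := ha
  simp_rw [← Nat.cast_smul_eq_nsmul ℝ]
  rw [coord_sum_smul _ hx]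
  positivity

theorem ne_zero_of_mem {a : V} (ha : a ∈ RS.Φ) : a ≠ 0 :=
  fun h => RS.zero_notMem (h ▸ ha)

theorem mem_span_base_of_mem {a : V} (ha : a ∈ RS.Φ) : a ∈ span ℝ (RS.base : Set V) := by
  rcases RS.base_gen a ha with hpos | hneg
  · exact IsPos.mem_span hpos
  · simpa using Submodule.neg_mem _ (IsPos.mem_span hneg)

theorem coord_nonneg_of_coord_pos {a : V} (ha : a ∈ RS.Φ) {x : V} (hx : x ∈ RS.base)
    (hax : 0 < RS.coord x a) {y : V} (hy : y ∈ RS.base) : 0 ≤ RS.coord y a := by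
  rcases RS.base_gen a ha with hpos | hneg
  · exact IsPos.coord_nonneg hpos hy
  · have := IsPos.coord_nonneg hneg hx
    rw [map_neg] at this
    linarith

theorem inner_mul_inner_lt {a b : V} (ha : a ∈ RS.Φ) (hb : b ∈ RS.Φ) (hab : a ≠ b)
    (hpos : 0 < ⟪a, b⟫) : ⟪a, b⟫ * ⟪a, b⟫ < ⟪a, a⟫ * ⟪b, b⟫ := by
  have hb0 : 0 < ‖b‖ := norm_pos_iff.mpr (ne_zero_of_mem hb)
  have hlt : ⟪a, b⟫ < ‖a‖ * ‖b‖ := by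
    refine inner_lt_norm_mul_iff_real.mpr fun h => ?_
    have ha' : (‖a‖ / ‖b‖) • b = a := by
      rw [div_eq_inv_mul, mul_smul, ← h, smul_smul, inv_mul_cancel₀ hb0.ne', one_smul]
    have hratio : 0 < ‖a‖ / ‖b‖ := div_pos (norm_pos_iff.mpr (ne_zero_of_mem ha)) hb0
    rcases RS.reduced b hb _ (ha'.symm ▸ ha) with h1 | h1
    · exact hab (by rw [← ha', h1, one_smul])
    · linarith
  rw [real_inner_self_eq_norm_mul_norm, real_inner_self_eq_norm_mul_norm]
  nlinarith

theorem sub_mem_of_inner_pos {a b : V} (ha : a ∈ RS.Φ) (hb : b ∈ RS.Φ) (hab : a ≠ b)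
    (hpos : 0 < ⟪a, b⟫) : a - b ∈ RS.Φ := by
  have haa : 0 < ⟪a, a⟫ := real_inner_self_pos.mpr (ne_zero_of_mem ha)
  have hbb : 0 < ⟪b, b⟫ := real_inner_self_pos.mpr (ne_zero_of_mem hb)
  have hpos' : 0 < ⟪b, a⟫ := real_inner_comm a b ▸ hpos
  obtain ⟨m, hm⟩ := RS.cartan_int a ha b hb
  obtain ⟨n, hn⟩ := RS.cartan_int b hb a ha
  have hm0 : 0 < m := by exact_mod_cast hm ▸ (by positivity : 0 < 2 * ⟪a, b⟫ / ⟪a, a⟫)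
  have hn0 : 0 < n := by exact_mod_cast hn ▸ (by positivity : 0 < 2 * ⟪b, a⟫ / ⟪b, b⟫)
  have hmn : m * n < 4 := by
    suffices (m : ℝ) * n < 4 by exact_mod_cast this
    rw [← hm, ← hn, real_inner_comm a b, div_mul_div_comm, div_lt_iff₀ (by positivity)]
    nlinarith [inner_mul_inner_lt ha hb hab hpos]
  have : m = 1 ∨ n = 1 := by
    by_contra! h
    nlinarith [(by omega : 2 ≤ m), (by omega : 2 ≤ n)]
  rcases this with rfl | rfl
  · have := RS.neg_mem _ (RS.reflect_mem a ha b hb)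
    rwa [hm, Int.cast_one, one_smul, neg_sub] at this
  · have := RS.reflect_mem b hb a ha
    rwa [hn, Int.cast_one, one_smul] at this

theorem inner_nonpos_of_mem_base {x y : V} (hx : x ∈ RS.base) (hy : y ∈ RS.base) (hxy : x ≠ y) :
    ⟪x, y⟫ ≤ 0 := by
  by_contra! h
  have := coord_nonneg_of_coord_pos (sub_mem_of_inner_pos (RS.base_sub hx) (RS.base_sub hy) hxy h)
    hx (by simp [coord_self hx, coord_of_ne hx hy hxy]) hy
  norm_num [coord_self hy, coord_of_ne hy hx hxy.symm] at this

theorem add_notMem_of_inner_eq_zero {r x : V} (hr : r ∈ RS.Φ) (hx : x ∈ RS.base)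
    (hcoord : RS.coord x r = 0) (horth : ⟪r, x⟫ = 0) : r + x ∉ RS.Φ := by
  intro hrx
  have hxr : x - r ∈ RS.Φ := by
    have hcoef : 2 * ⟪r, r + x⟫ / ⟪r, r⟫ = 2 := by
      rw [inner_add_right, horth, add_zero, mul_div_assoc,
        div_self (real_inner_self_pos.mpr (ne_zero_of_mem hr)).ne', mul_one]
    convert RS.reflect_mem r hr _ hrx using 1
    rw [hcoef]
    module
  -- `r + x` and `x - r` are positive roots, but `r` enters them with opposite signs
  obtain ⟨z, hz, hrz⟩ := exists_coord_ne_zero (mem_span_base_of_mem hr) (ne_zero_of_mem hr)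
  have hzx : z ≠ x := fun h => hrz (h ▸ hcoord)
  have h₁ := coord_nonneg_of_coord_pos hrx hx (by simp [hcoord, coord_self hx]) hz
  have h₂ := coord_nonneg_of_coord_pos hxr hx (by simp [hcoord, coord_self hx]) hz
  simp only [map_add, map_sub, coord_of_ne hz hx hzx] at h₁ h₂
  exact hrz (by linarith)

theorem IsHighest.coord_nonneg {atil : V} (hatil : RS.IsHighest atil) {x : V}
    (hx : x ∈ RS.base) : 0 ≤ RS.coord x atil := by
  have : 0 ≤ RS.coord x (atil - -atil) :=
    IsPos.coord_nonneg (hatil.2 _ (RS.neg_mem _ hatil.1)) hx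
  simp only [map_sub, map_neg] at this
  linarith

theorem IsHighest.abs_coord_le {atil : V} (hatil : RS.IsHighest atil) {a : V} (ha : a ∈ RS.Φ)
    {x : V} (hx : x ∈ RS.base) : |RS.coord x a| ≤ RS.coord x atil := by
  have h₁ : 0 ≤ RS.coord x (atil - a) := IsPos.coord_nonneg (hatil.2 _ ha) hx
  have h₂ : 0 ≤ RS.coord x (atil - -a) := IsPos.coord_nonneg (hatil.2 _ (RS.neg_mem _ ha)) hx
  simp only [map_sub, map_neg] at h₁ h₂
  exact abs_le.mpr ⟨by linarith, by linarith⟩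

theorem IsHighest.inner_nonneg {atil : V} (hatil : RS.IsHighest atil) {x : V}
    (hx : x ∈ RS.base) : 0 ≤ ⟪atil, x⟫ := by
  by_contra! h
  have hxΦ := RS.base_sub hx
  obtain ⟨b, hb, hcoord⟩ : ∃ b ∈ RS.Φ, RS.coord x (atil - b) < 0 := by
    by_cases hneg : atil = -x
    · exact ⟨x, hxΦ, by simp [hneg, coord_self hx]⟩
    · refine ⟨atil - -x, sub_mem_of_inner_pos hatil.1 (RS.neg_mem x hxΦ) hneg ?_, ?_⟩
      · rw [inner_neg_right]
        linarith
      · simp [coord_self hx]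
  exact hcoord.not_ge (IsPos.coord_nonneg (hatil.2 b hb) hx)

theorem IsHighest.inner_eq_zero_of_coord_eq_zero {atil : V} (hatil : RS.IsHighest atil)
    {y z : V} (hy : y ∈ RS.base) (hz : z ∈ RS.base) (hcy : RS.coord y atil ≠ 0)
    (hcz : RS.coord z atil = 0) : ⟪y, z⟫ = 0 := by
  have hterm : ∀ w ∈ RS.base, RS.coord w atil * ⟪w, z⟫ ≤ 0 := by
    intro w hw
    by_cases hwz : w = z
    · simp [hwz, hcz]
    · exact mul_nonpos_of_nonneg_of_nonpos (hatil.coord_nonneg hw)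
        (inner_nonpos_of_mem_base hw hz hwz)
  have hexpand : ⟪atil, z⟫ = ∑ w ∈ RS.base, RS.coord w atil * ⟪w, z⟫ := by
    conv_lhs => rw [← sum_coord_smul (mem_span_base_of_mem hatil.1)]
    simp [sum_inner, real_inner_smul_left]
  have hzero : ∑ w ∈ RS.base, RS.coord w atil * ⟪w, z⟫ = 0 :=
    le_antisymm (Finset.sum_nonpos hterm) (hexpand ▸ hatil.inner_nonneg hz)
  exact (mul_eq_zero.mp ((Finset.sum_eq_zero_iff_of_nonpos hterm).mp hzero y hy)).resolve_left hcy

theorem mem_span_of_sub_mem_span {S T : Set V} (hS : S ⊆ RS.base) (hST : span ℝ S ⟂ span ℝ T)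
    {a x : V} (ha : a ∈ RS.Φ) (hx : x ∈ RS.base) (hxST : x ∈ S ∨ x ∈ T) (hax : a - x ∈ RS.Φ)
    (haxS : a - x ∈ span ℝ S) : a ∈ span ℝ S := by
  by_cases hxS : x ∈ S
  · simpa using add_mem haxS (subset_span hxS)
  · refine absurd (by simpa using ha) (add_notMem_of_inner_eq_zero hax hx
      (coord_eq_zero_of_mem_span hS hx hxS haxS) (hST.inner_eq haxS ?_))
    exact subset_span (hxST.resolve_left hxS)

theorem exists_mem_support_inner_pos {a : V} (ha : a ∈ RS.Φ) (c : V → ℕ)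
    (hc : a = ∑ x ∈ RS.base, c x • x) : ∃ x ∈ RS.base, c x ≠ 0 ∧ 0 < ⟪x, a⟫ := by
  have hsum : ∑ x ∈ RS.base, (0 : ℝ) < ∑ x ∈ RS.base, (c x : ℝ) * ⟪x, a⟫ := by
    have := real_inner_self_pos.mpr (ne_zero_of_mem ha)
    nth_rewrite 1 [hc] at this
    simpa [sum_inner, ← Nat.cast_smul_eq_nsmul ℝ, real_inner_smul_left] using this
  obtain ⟨x, hx, hpos⟩ := Finset.exists_lt_of_sum_lt hsum
  exact ⟨x, hx, fun h => by simp [h] at hpos, pos_of_mul_pos_right hpos (Nat.cast_nonneg _)⟩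

theorem isPos_mem_span_or_mem_span {P Q : Set V} (hP : P ⊆ RS.base) (hQ : Q ⊆ RS.base)
    (hPQ : span ℝ P ⟂ span ℝ Q) (hcover : ↑RS.base ⊆ P ∪ Q) (n : ℕ) :
    ∀ {a : V} (c : V → ℕ), a ∈ RS.Φ → a = ∑ x ∈ RS.base, c x • x → ∑ x ∈ RS.base, c x = n →
      a ∈ span ℝ P ∨ a ∈ span ℝ Q := by
  classical
  induction n with
  | zero =>
    intro a c ha hc hn
    refine absurd ?_ (ne_zero_of_mem ha)
    rw [hc]
    exact Finset.sum_eq_zero fun x hx => by simp [Finset.sum_eq_zero_iff.mp hn x hx]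
  | succ n ih =>
    intro a c ha hc hn
    obtain ⟨x, hx, hcx, hxa⟩ := exists_mem_support_inner_pos ha c hc
    by_cases hax : a = x
    · subst hax
      exact (hcover hx).imp (fun h => subset_span h) (fun h => subset_span h)
    obtain ⟨c', rfl⟩ : ∃ c', c = c' + Pi.single x 1 :=
      ⟨c - Pi.single x 1, funext fun y => by by_cases y = x <;> simp_all; omega⟩
    have hsub : a - x ∈ RS.Φ :=
      sub_mem_of_inner_pos ha (RS.base_sub hx) hax (real_inner_comm a x ▸ hxa)
    have hsingle : ∀ f : V → V, ∑ y ∈ RS.base, (Pi.single x 1 : V → ℕ) y • f y = f x := by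
      intro f
      simp [Pi.single_apply, hx]
    specialize ih c' hsub (by simp [hc, add_smul, Finset.sum_add_distrib, hsingle])
      (by simpa [Finset.sum_add_distrib, Pi.single_apply, hx] using hn)
    exact ih.imp (mem_span_of_sub_mem_span hP hPQ ha hx (hcover hx) hsub)
      (mem_span_of_sub_mem_span hQ hPQ.symm ha hx (hcover hx).symm hsub)

theorem mem_span_or_mem_span {P Q : Set V} (hP : P ⊆ RS.base) (hQ : Q ⊆ RS.base)
    (hPQ : span ℝ P ⟂ span ℝ Q) (hcover : ↑RS.base ⊆ P ∪ Q) {a : V} (ha : a ∈ RS.Φ) :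
    a ∈ span ℝ P ∨ a ∈ span ℝ Q := by
  rcases RS.base_gen a ha with ⟨c, hc⟩ | ⟨c, hc⟩
  · exact isPos_mem_span_or_mem_span hP hQ hPQ hcover _ c ha hc rfl
  · simpa using isPos_mem_span_or_mem_span hP hQ hPQ hcover _ c (RS.neg_mem a ha) hc rfl

theorem Irred.base_subset_of_orthogonal (hirr : RS.Irred) {P : Set V} (hP : P ⊆ RS.base)
    (hne : P.Nonempty) (horth : ∀ x ∈ P, ∀ y ∈ (RS.base : Set V) \ P, ⟪x, y⟫ = 0) :
    ↑RS.base ⊆ P := by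
  have hPQ := isOrtho_span.mpr horth
  have hT : {a ∈ RS.Φ | a ∈ span ℝ P} = RS.Φ := by
    refine hirr.2.2.2 _ (fun a ha => ha.1) ?_ fun a ha b hb => ?_
    · obtain ⟨x, hx⟩ := hne
      exact ⟨x, RS.base_sub (hP hx), subset_span hx⟩
    · have hbQ := (mem_span_or_mem_span hP Set.sdiff_subset hPQ (by simp) hb.1).resolve_left
        fun h => hb.2 ⟨hb.1, h⟩
      exact hPQ.inner_eq ha.2 hbQ
  intro y hy
  by_contra hyP
  have hyT : y ∈ {a ∈ RS.Φ | a ∈ span ℝ P} := by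
    rw [hT]
    exact RS.base_sub hy
  simpa [coord_self hy] using coord_eq_zero_of_mem_span hP hy hyP hyT.2

theorem IsHighest.coord_pos (hirr : RS.Irred) {atil : V} (hatil : RS.IsHighest atil) {x : V}
    (hx : x ∈ RS.base) : 0 < RS.coord x atil := by
  obtain ⟨y, hy, hcy⟩ :=
    exists_coord_ne_zero (mem_span_base_of_mem hatil.1) (ne_zero_of_mem hatil.1)
  have hsupp := hirr.base_subset_of_orthogonal (P := {y ∈ RS.base | RS.coord y atil ≠ 0})
    (fun y hy => hy.1) ⟨y, hy, hcy⟩ fun y hy z hz =>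
      hatil.inner_eq_zero_of_coord_eq_zero hy.1 hz.1 hy.2 (not_not.mp fun h => hz.2 ⟨hz.1, h⟩)
  exact (hatil.coord_nonneg hx).lt_of_ne' (hsupp hx).2

theorem coord_eq_of_proj_eq {J : Finset V} {x : V} (hxJ : x ∈ J) (hx : x ∈ RS.base) {v w : V}
    (h : RS.proj J v = RS.proj J w) : RS.coord x v = RS.coord x w := by
  have := coord_eq_zero_of_mem_span Set.sdiff_subset hx (fun h => h.2 hxJ)
    ((Submodule.Quotient.eq _).mp h)
  rwa [map_sub, sub_eq_zero] at this

end RootSystemData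

theorem abs_le_one_and_mul_nonpos_of_abs_le {i j : ℤ} {c₀ c₁ : ℝ} (hc₁ : 0 < c₁)
    (h₁ : |i * c₁| ≤ c₁) (h₀ : |i * c₀ + j| ≤ c₀) : |i| ≤ 1 ∧ i * j ≤ 0 := by
  have hi : |i| ≤ 1 := by
    rw [abs_mul, abs_of_pos hc₁] at h₁
    exact_mod_cast (mul_le_iff_le_one_left hc₁).mp h₁
  refine ⟨hi, ?_⟩
  suffices (i : ℝ) * j ≤ 0 by exact_mod_cast this
  obtain ⟨hlo, hhi⟩ := abs_le.mp h₀
  obtain ⟨hi₁, hi₂⟩ := abs_le.mp hi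
  rcases (by omega : i = -1 ∨ i = 0 ∨ i = 1) with rfl | rfl | rfl <;> push_cast at * <;> linarith

open RootSystemData in
theorem stmt5 {V : Type} [NormedAddCommGroup V] [InnerProductSpace ℝ V]
    (RS : RootSystemData V) (hirr : RS.Irred)
    (J : Finset V) (hJ : J ⊆ RS.base) (hrank : 2 ≤ J.card)
    (atil : V) (hatil : RS.IsHighest atil)
    (γ : RS.Qspace J) (hγ : RS.IsSimpleRel J γ) :
    ∀ i j : ℤ, i • RS.proj J atil + j • γ ∈ RS.relRoots J →
      (i = 0 ∨ i = 1 ∨ i = -1) ∧ (i ≠ 0 → (j = 0 ∨ i * j < 0)) := by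
  rintro i j ⟨⟨a, ha, hπ⟩, -⟩
  obtain ⟨-, b₀, hb₀, rfl⟩ := hγ
  have hcoord : ∀ x ∈ J, RS.coord x a = i * RS.coord x atil + j * RS.coord x b₀ := by
    intro x hx
    simpa using coord_eq_of_proj_eq hx (hJ hx) (w := i • atil + j • b₀) (by simpa using hπ)
  obtain ⟨b₁, hb₁, hne⟩ := Finset.exists_mem_ne hrank b₀
  have h₁ := hatil.abs_coord_le ha (hJ hb₁)
  have h₀ := hatil.abs_coord_le ha (hJ hb₀)
  rw [hcoord b₁ hb₁, coord_of_ne (hJ hb₁) (hJ hb₀) hne, mul_zero, add_zero] at h₁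
  rw [hcoord b₀ hb₀, coord_self (hJ hb₀), mul_one] at h₀
  obtain ⟨hi, hij⟩ := abs_le_one_and_mul_nonpos_of_abs_le (hatil.coord_pos hirr (hJ hb₁)) h₁ h₀
  obtain ⟨hi₁, hi₂⟩ := abs_le.mp hi
  rcases (by omega : i = -1 ∨ i = 0 ∨ i = 1) with rfl | rfl | rfl <;> omega
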